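/- (Policy update identity for MDPs.) For a finite discounted MDP and any two policies π and π†, the difference in expected discounted return from initial distribution ρ₀ equals the discounted-visitation-weighted sum of advantages: u(π†) = u(π) + Σ_s ρ_{π†}(s) Σ_a π†(a|s) A_π(s,a), where ρ_{π†}(s) = Σ_k γ^k P(s_k = s | π†, ρ₀) and A_π(s,a) = Q_π(s,a) − V_π(s). -/

import Mathlib

/-!
Let `M s s' = ∑ₐ π†(a|s) P(s'|s,a)` be the state-to-state transition matrix of `π†`. Since
`∑ₐ π†(a|s) = 1`, the Bellman equation of `V_{π†}` turns the expected advantage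
`∑ₐ π†(a|s) (Q s a - V s)` into `((I - γM)(V_{π†} - V))(s)`, while the visitation equation says
`ρ_{π†}ᵀ (I - γM) = ρ₀ᵀ`. Pairing the two gives `ρ₀ᵀ (V_{π†} - V)`.
-/

open Matrix

section PolicyKernel

variable {S A R : Type*} [Fintype S] [Fintype A] [CommRing R]

def policyKernel (P : S → A → S → R) (π : S → A → R) : Matrix S S R :=
  Matrix.of fun s s' => ∑ a, π s a * P s a s'

theorem policyKernel_mulVec_apply (P : S → A → S → R) (π : S → A → R) (v : S → R) (s : S) :
    (policyKernel P π *ᵥ v) s = ∑ a, π s a * ∑ s', P s a s' * v s' := by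
  simp only [policyKernel, mulVec, dotProduct, of_apply, Finset.sum_mul, Finset.mul_sum]
  rw [Finset.sum_comm]
  simp only [mul_assoc]

theorem vecMul_policyKernel_apply (P : S → A → S → R) (π : S → A → R) (ρ : S → R) (s : S) :
    (ρ ᵥ* policyKernel P π) s = ∑ s', ρ s' * ∑ a, π s' a * P s' a s :=
  rfl

theorem dotProduct_sub_smul_mulVec_of_eq_add_smul_vecMul {M : Matrix S S R} {ρ ρ₀ : S → R}
    {c : R} (hρ : ρ = ρ₀ + c • (ρ ᵥ* M)) (x : S → R) :
    ρ ⬝ᵥ (x - c • (M *ᵥ x)) = ρ₀ ⬝ᵥ x := by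
  have hρ₀ : ρ₀ = ρ - c • (ρ ᵥ* M) := eq_sub_of_add_eq hρ.symm
  rw [hρ₀, dotProduct_sub, sub_dotProduct, dotProduct_smul, smul_dotProduct, dotProduct_mulVec]

theorem sum_policy_mul_advantage (P : S → A → S → R) (r : S → A → R) (γ : R)
    {π : S → A → R} {s : S} (hπ : ∑ a, π s a = 1) {W : S → R}
    (hW : W s = ∑ a, π s a * (r s a + γ * ∑ s', P s a s' * W s')) (V : S → R) :
    ∑ a, π s a * (r s a + γ * ∑ s', P s a s' * V s' - V s) =
      (W - V) s - γ * (policyKernel P π *ᵥ (W - V)) s := by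
  rw [mulVec_sub, Pi.sub_apply, Pi.sub_apply, hW, policyKernel_mulVec_apply,
    policyKernel_mulVec_apply]
  simp only [mul_sub, Finset.sum_sub_distrib, ← Finset.sum_mul, hπ, one_mul, mul_add,
    Finset.sum_add_distrib, mul_left_comm _ γ, ← Finset.mul_sum]
  ring

end PolicyKernel

theorem stmt17_general {S A : Type*} [Fintype S] [Fintype A]
    (P : S → A → S → ℝ)
    (r : S → A → ℝ) (γ : ℝ)
    (ρ0 : S → ℝ)
    (πd : S → A → ℝ)
    (hπd : ∀ s, (∀ a, 0 ≤ πd s a) ∧ ∑ a, πd s a = 1)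
    (V Vd : S → ℝ)
    (hVd : ∀ s, Vd s = ∑ a, πd s a * (r s a + γ * ∑ s', P s a s' * Vd s'))
    (Q : S → A → ℝ) (hQ : ∀ s a, Q s a = r s a + γ * ∑ s', P s a s' * V s')
    (ρd : S → ℝ)
    (hρd : ∀ s, ρd s = ρ0 s + γ * ∑ s', ρd s' * ∑ a, πd s' a * P s' a s) :
    ∑ s, ρ0 s * Vd s =
      (∑ s, ρ0 s * V s) + ∑ s, ρd s * ∑ a, πd s a * (Q s a - V s) := by
  set M := policyKernel P πd
  have hadvantage : (fun s => ∑ a, πd s a * (Q s a - V s)) = (Vd - V) - γ • (M *ᵥ (Vd - V)) := by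
    funext s
    simp only [hQ]
    exact sum_policy_mul_advantage P r γ (hπd s).2 (hVd s) V
  have hvisitation : ρd = ρ0 + γ • (ρd ᵥ* M) := by
    funext s
    rw [hρd s, Pi.add_apply, Pi.smul_apply, vecMul_policyKernel_apply, smul_eq_mul]
  calc ρ0 ⬝ᵥ Vd = ρ0 ⬝ᵥ V + ρ0 ⬝ᵥ (Vd - V) := by rw [dotProduct_sub]; ring
    _ = ρ0 ⬝ᵥ V + ρd ⬝ᵥ ((Vd - V) - γ • (M *ᵥ (Vd - V))) := by
      rw [dotProduct_sub_smul_mulVec_of_eq_add_smul_vecMul hvisitation]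
    _ = _ := by rw [← hadvantage]; rfl

/-- Policy update identity for finite discounted MDPs:
`u(π†) = u(π) + ∑_s ρ_{π†}(s) ∑_a π†(a|s) A_π(s,a)`, where values satisfy the
Bellman equations and `ρ_{π†}` the discounted-visitation equation. -/
theorem stmt17 {S A : Type*} [Fintype S] [Fintype A]
    (P : S → A → S → ℝ) (hP : ∀ s a, (∀ s', 0 ≤ P s a s') ∧ ∑ s', P s a s' = 1)
    (r : S → A → ℝ) (γ : ℝ) (hγ : γ ∈ Set.Ioo (0:ℝ) 1)
    (ρ0 : S → ℝ) (hρ0 : (∀ s, 0 ≤ ρ0 s) ∧ ∑ s, ρ0 s = 1)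
    (π πd : S → A → ℝ)
    (hπ : ∀ s, (∀ a, 0 ≤ π s a) ∧ ∑ a, π s a = 1)
    (hπd : ∀ s, (∀ a, 0 ≤ πd s a) ∧ ∑ a, πd s a = 1)
    (V Vd : S → ℝ)
    (hV : ∀ s, V s = ∑ a, π s a * (r s a + γ * ∑ s', P s a s' * V s'))
    (hVd : ∀ s, Vd s = ∑ a, πd s a * (r s a + γ * ∑ s', P s a s' * Vd s'))
    (Q : S → A → ℝ) (hQ : ∀ s a, Q s a = r s a + γ * ∑ s', P s a s' * V s')
    (ρd : S → ℝ)
    (hρd : ∀ s, ρd s = ρ0 s + γ * ∑ s', ρd s' * ∑ a, πd s' a * P s' a s) :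
    ∑ s, ρ0 s * Vd s =
      (∑ s, ρ0 s * V s) + ∑ s, ρd s * ∑ a, πd s a * (Q s a - V s) :=
  stmt17_general P r γ ρ0 πd hπd V Vd hVd Q hQ ρd hρd
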